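/- Suppose zer(A+B+C) ≠ ∅, let z̄ ∈ zer(A+B+C), and let γ_min > 0 satisfy γ_k ≥ γ_min for every k ∈ ℕ. Then for every positive integer K with K ≥ (1/ε²) · ((1 + √α_max)² / (γ_min² (1 − α_max))) · ‖x₀ − z̄‖², there exists k ∈ {0, …, K−1} such that ‖u_k‖ ≤ ε, where the sequences are generated by the AFBF algorithm with Stepsize Choice 2. -/

import Mathlib

/-!
Every AFBF step is a Fejér-type step towards `z̄`. Since `u_k ∈ (A + B + C) p_k` and
`0 ∈ (A + B + C) z̄`, pseudo-monotonicity gives `⟪u_k, p_k - z̄⟫ ≥ 0`, and with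
`e_k = (A + B) p_k - (A + B) x_k` and the nonexpansiveness of the projection this yields
`‖x_{k+1} - z̄‖² ≤ ‖x_k - z̄‖² - ‖x_k - p_k‖² + γ_k² ‖e_k‖²`.
The growth condition on `A` bounds `‖e_k‖²` by powers of `s_k = ‖x_k - p_k‖`, and
`s_k ≤ γ_k d(x_k)`. Each of the two stepsize equations then handles one regime: if
`s_k ≤ γ_k ε / 2` then `‖u_k‖ ≤ ε`, and otherwise `γ_k² ‖e_k‖² ≤ α_max s_k²` and
`γ_k ‖u_k‖ ≤ (1 + √α_max) s_k`. If `‖u_k‖ > ε` for all `k < K`, the descent telescopes to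
`(1 - α_max) ∑ s_k² ≤ ‖x_0 - z̄‖²` while every `s_k` exceeds `ε γ_min / (1 + √α_max)`, which
contradicts the bound on `K`.
-/

open scoped RealInnerProductSpace Pointwise
open Filter Topology

namespace Real

theorem rpow_sub_two_mul_sq {x : ℝ} (hx : x ≠ 0) (e : ℝ) : x ^ (e - 2) * x ^ 2 = x ^ e := by
  rw [← rpow_add_natCast hx]; norm_num

theorem sq_mul_rpow_eq {g D : ℝ} (hg : 0 < g) (hD : 0 ≤ D) (e : ℝ) :
    g ^ 2 * (g * D) ^ (e - 2) = D ^ (e - 2) * g ^ e := by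
  rw [mul_rpow hg.le hD, ← rpow_sub_two_mul_sq hg.ne' e]
  ring

theorem sq_mul_rpow_le_of_le_mul {s g D e : ℝ} (hs : 0 < s) (hg : 0 < g) (hsD : s ≤ g * D)
    (he : 2 ≤ e) : g ^ 2 * s ^ e ≤ D ^ (e - 2) * g ^ e * s ^ 2 := by
  have hD : 0 ≤ D := nonneg_of_mul_nonneg_right (hs.le.trans hsD) hg
  calc g ^ 2 * s ^ e = g ^ 2 * s ^ (e - 2) * s ^ 2 := by
        rw [mul_assoc, rpow_sub_two_mul_sq hs.ne']
    _ ≤ g ^ 2 * (g * D) ^ (e - 2) * s ^ 2 := by gcongr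
    _ = D ^ (e - 2) * g ^ e * s ^ 2 := by rw [sq_mul_rpow_eq hg hD]

theorem sq_mul_rpow_le_of_mul_le {s g D e : ℝ} (hg : 0 < g) (hD : 0 < D) (hsD : g * D ≤ s)
    (he : e ≤ 2) : g ^ 2 * s ^ e ≤ D ^ (e - 2) * g ^ e * s ^ 2 := by
  have hs : 0 < s := (mul_pos hg hD).trans_le hsD
  calc g ^ 2 * s ^ e = g ^ 2 * s ^ (e - 2) * s ^ 2 := by
        rw [mul_assoc, rpow_sub_two_mul_sq hs.ne']
    _ ≤ g ^ 2 * (g * D) ^ (e - 2) * s ^ 2 := by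
        gcongr g ^ 2 * ?_ * _
        exact rpow_le_rpow_of_nonpos (mul_pos hg hD) hsD (by linarith)
    _ = D ^ (e - 2) * g ^ e * s ^ 2 := by rw [sq_mul_rpow_eq hg hD.le]

theorem rpow_le_of_le_mul_of_le_mul {s g D δ μ e : ℝ} (hs : 0 ≤ s) (hg : 0 < g)
    (hsD : s ≤ g * D) (hsδ : s ≤ g * δ) (hμ : 0 < μ) (hμe : μ ≤ e) :
    s ^ e ≤ δ ^ μ * (D ^ (e - μ) * g ^ e) := by
  have hD : 0 ≤ D := nonneg_of_mul_nonneg_right (hs.trans hsD) hg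
  have hδ : 0 ≤ δ := nonneg_of_mul_nonneg_right (hs.trans hsδ) hg
  calc s ^ e = s ^ μ * s ^ (e - μ) := by
        rw [← rpow_add' hs (by linarith)]; ring_nf
    _ ≤ (g * δ) ^ μ * (g * D) ^ (e - μ) := by gcongr
    _ = δ ^ μ * (D ^ (e - μ) * g ^ e) := by
        rw [mul_rpow hg.le hδ, mul_rpow hg.le hD, ← add_sub_cancel μ e, rpow_add hg,
          add_sub_cancel_left]
        ring

theorem half_rpow_sub_two {ε : ℝ} (hε : 0 < ε) (μ : ℝ) :
    (ε / 2) ^ (μ - 2) = 2 ^ (2 - μ) * ε ^ (μ - 2) := by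
  rw [div_rpow hε.le zero_le_two, div_eq_mul_inv, ← rpow_neg zero_le_two, neg_sub, mul_comm]

end Real

open Real

theorem sq_mul_increment_bound_le_of_large_residual {L a b c D ε μ θ β g s α : ℝ}
    (ha : 0 ≤ a) (hb : 0 ≤ b) (hc : 0 ≤ c) (hε : 0 < ε) (hg : 0 < g)
    (hμ : μ ≤ 2) (hθ : 2 ≤ θ) (hβ : 2 ≤ β) (hsD : s ≤ g * D) (hsε : g * (ε / 2) ≤ s)
    (hpoly : L ^ 2 * g ^ 2 + b * D ^ (θ - 2) * g ^ θ + c * D ^ (β - 2) * g ^ β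
      + 2 ^ (2 - μ) * a * g ^ μ * ε ^ (μ - 2) ≤ α / 2) :
    g ^ 2 * (2 * (a * s ^ μ + b * s ^ θ + c * s ^ β) + 2 * (L ^ 2 * s ^ 2)) ≤ α * s ^ 2 := by
  have hs : 0 < s := (mul_pos hg (half_pos hε)).trans_le hsε
  have tμ := sq_mul_rpow_le_of_mul_le hg (half_pos hε) hsε hμ
  rw [half_rpow_sub_two hε] at tμ
  have tθ := sq_mul_rpow_le_of_le_mul hs hg hsD hθ
  have tβ := sq_mul_rpow_le_of_le_mul hs hg hsD hβ
  have hpoly' := mul_le_mul_of_nonneg_left hpoly (by positivity : (0 : ℝ) ≤ 2 * s ^ 2)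
  nlinarith [mul_le_mul_of_nonneg_left tμ ha, mul_le_mul_of_nonneg_left tθ hb,
    mul_le_mul_of_nonneg_left tβ hc]

theorem increment_bound_le_of_small_residual {L a b c D ε μ θ β g s α : ℝ}
    (ha : 0 ≤ a) (hb : 0 ≤ b) (hc : 0 ≤ c) (hε : 0 < ε) (hg : 0 < g) (hs : 0 ≤ s)
    (hμ0 : 0 < μ) (hμ : μ ≤ 2) (hθ : μ ≤ θ) (hβ : μ ≤ β) (hsD : s ≤ g * D)
    (hsε : s ≤ g * (ε / 2))
    (hpoly : L ^ 2 * D ^ (2 - μ) * g ^ 2 + b * D ^ (θ - μ) * g ^ θ + c * D ^ (β - μ) * g ^ β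
      + a * g ^ μ ≤ ε ^ (2 - μ) * α / 2 ^ (3 - μ)) :
    2 * (a * s ^ μ + b * s ^ θ + c * s ^ β) + 2 * (L ^ 2 * s ^ 2) ≤ ε ^ 2 * α / 4 := by
  have bound (e : ℝ) (he : μ ≤ e) := rpow_le_of_le_mul_of_le_mul hs hg hsD hsε hμ0 he
  have tμ := bound μ le_rfl
  rw [sub_self, rpow_zero, one_mul] at tμ
  have t2 := bound 2 hμ
  rw [rpow_two, rpow_two] at t2
  have tθ := bound θ hθ
  have tβ := bound β hβ
  have hscale : (ε / 2) ^ μ * (ε ^ (2 - μ) * α / 2 ^ (3 - μ)) = ε ^ 2 * α / 8 := by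
    have hε2 : ε ^ μ * ε ^ (2 - μ) = ε ^ 2 := by
      rw [← rpow_add hε, add_sub_cancel, rpow_two]
    have h8 : (2 : ℝ) ^ μ * 2 ^ (3 - μ) = 8 := by
      rw [← rpow_add two_pos, add_sub_cancel]; norm_num
    calc (ε / 2) ^ μ * (ε ^ (2 - μ) * α / 2 ^ (3 - μ))
        = ε ^ μ * ε ^ (2 - μ) * α / (2 ^ μ * 2 ^ (3 - μ)) := by
          rw [div_rpow hε.le zero_le_two]; ring
      _ = ε ^ 2 * α / 8 := by rw [hε2, h8]
  have hpoly' := mul_le_mul_of_nonneg_left hpoly (by positivity : (0 : ℝ) ≤ 2 * (ε / 2) ^ μ)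
  nlinarith [mul_le_mul_of_nonneg_left tμ ha, mul_le_mul_of_nonneg_left tθ hb,
    mul_le_mul_of_nonneg_left tβ hc, mul_le_mul_of_nonneg_left t2 (sq_nonneg L)]

theorem afbf_residual_dichotomy {L a b c D ε μ θ β g s α r e : ℝ}
    (ha : 0 ≤ a) (hb : 0 ≤ b) (hc : 0 ≤ c) (hε : 0 < ε) (hg : 0 < g) (hs : 0 ≤ s) (he : 0 ≤ e)
    (hμ0 : 0 < μ) (hμ : μ ≤ 2) (hθ : 2 ≤ θ) (hβ : 2 ≤ β) (hα : α ≤ 1) (hsD : s ≤ g * D)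
    (hr : r ≤ g⁻¹ * s + e)
    (heb : e ^ 2 ≤ 2 * (a * s ^ μ + b * s ^ θ + c * s ^ β) + 2 * (L ^ 2 * s ^ 2))
    (hpoly₁ : L ^ 2 * g ^ 2 + b * D ^ (θ - 2) * g ^ θ + c * D ^ (β - 2) * g ^ β
      + 2 ^ (2 - μ) * a * g ^ μ * ε ^ (μ - 2) ≤ α / 2)
    (hpoly₂ : L ^ 2 * D ^ (2 - μ) * g ^ 2 + b * D ^ (θ - μ) * g ^ θ + c * D ^ (β - μ) * g ^ β
      + a * g ^ μ ≤ ε ^ (2 - μ) * α / 2 ^ (3 - μ)) :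
    r ≤ ε ∨ (g ^ 2 * e ^ 2 ≤ α * s ^ 2 ∧ g * r ≤ (1 + √α) * s) := by
  -- `hpoly₂` is tailored to the case `s ≤ g ε / 2`, `hpoly₁` to the case `s > g ε / 2`
  rcases le_or_gt s (g * (ε / 2)) with hsmall | hlarge
  · left
    have he2 : e ^ 2 ≤ (ε / 2) ^ 2 := by
      nlinarith [increment_bound_le_of_small_residual ha hb hc hε hg hs hμ0 hμ (by linarith)
        (by linarith) hsD hsmall hpoly₂]
    have he' : e ≤ ε / 2 := (pow_le_pow_iff_left₀ he (by positivity) two_ne_zero).mp he2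
    have hs' : g⁻¹ * s ≤ ε / 2 := (inv_mul_le_iff₀ hg).mpr hsmall
    linarith
  · right
    have hge : g ^ 2 * e ^ 2 ≤ α * s ^ 2 :=
      (mul_le_mul_of_nonneg_left heb (sq_nonneg g)).trans
        (sq_mul_increment_bound_le_of_large_residual ha hb hc hε hg hμ hθ hβ hsD hlarge.le hpoly₁)
    have hge' : g * e ≤ √α * s := by
      have := sqrt_le_sqrt (by rwa [← mul_pow] at hge : (g * e) ^ 2 ≤ α * s ^ 2)
      rwa [sqrt_sq (by positivity), sqrt_mul' _ (sq_nonneg s), sqrt_sq hs] at this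
    refine ⟨hge, ?_⟩
    calc g * r ≤ g * (g⁻¹ * s + e) := mul_le_mul_of_nonneg_left hr hg.le
      _ = s + g * e := by field_simp
      _ ≤ (1 + √α) * s := by linarith

theorem exists_lt_le_of_forall_add_mul_le {V t : ℕ → ℝ} {r m : ℝ} {K : ℕ} (hK0 : 0 < K)
    (hr : 0 < r) (hm : 0 < m) (hK : V 0 / (r * m) ≤ K) (hVK : 0 ≤ V K)
    (hdesc : ∀ k < K, V (k + 1) + r * t k ≤ V k) : ∃ k < K, t k ≤ m := by
  by_contra! ht
  have hsum : ∑ k ∈ Finset.range K, r * m < ∑ k ∈ Finset.range K, (V k - V (k + 1)) := by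
    refine Finset.sum_lt_sum_of_nonempty (Finset.nonempty_range_iff.mpr hK0.ne') fun k hk => ?_
    have hk := Finset.mem_range.mp hk
    nlinarith [hdesc k hk, ht k hk]
  rw [Finset.sum_range_sub', Finset.sum_const, Finset.card_range, nsmul_eq_mul] at hsum
  rw [div_le_iff₀ (by positivity)] at hK
  linarith

section NormedAddCommGroup

variable {H : Type*} [NormedAddCommGroup H]

theorem eq_of_forall_norm_sub_le {K : Set H} {w q : H} (hw : w ∈ K)
    (hq : ∀ y ∈ K, ‖w - q‖ ≤ ‖w - y‖) : q = w := by
  simpa [sub_eq_zero, eq_comm] using hq w hw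

theorem norm_increment_sq_le {A B : H → H} {domC : Set H} {L μ θ β : ℝ} {a b c : H → ℝ}
    (hA : ∀ z₁ ∈ domC, ∀ z₂ ∈ domC, ‖A z₁ - A z₂‖ ^ 2 ≤
      a z₁ * ‖z₁ - z₂‖ ^ μ + b z₁ * ‖z₁ - z₂‖ ^ θ + c z₁ * ‖z₁ - z₂‖ ^ β)
    (hB : ∀ x ∈ domC, ∀ y ∈ domC, ‖B x - B y‖ ≤ L * ‖x - y‖)
    {x p : H} (hx : x ∈ domC) (hp : p ∈ domC) :
    ‖A p + B p - A x - B x‖ ^ 2 ≤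
      2 * (a x * ‖x - p‖ ^ μ + b x * ‖x - p‖ ^ θ + c x * ‖x - p‖ ^ β)
        + 2 * (L ^ 2 * ‖x - p‖ ^ 2) := by
  have hsplit : A p + B p - A x - B x = -((A x - A p) + (B x - B p)) := by abel
  have hB' := pow_le_pow_left₀ (norm_nonneg _) (hB x hx p hp) 2
  rw [mul_pow] at hB'
  calc ‖A p + B p - A x - B x‖ ^ 2 ≤ (‖A x - A p‖ + ‖B x - B p‖) ^ 2 := by
        rw [hsplit, norm_neg]; gcongr; exact norm_add_le _ _
    _ ≤ 2 * (‖A x - A p‖ ^ 2 + ‖B x - B p‖ ^ 2) := add_sq_le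
    _ ≤ _ := by linarith [hA x hx p hp]

end NormedAddCommGroup

section InnerProductSpace

variable {H : Type*} [NormedAddCommGroup H] [InnerProductSpace ℝ H]

theorem norm_sub_le_of_forall_norm_sub_le {K : Set H} (hK : Convex ℝ K) {w q y : H}
    (hqK : q ∈ K) (hq : ∀ y ∈ K, ‖w - q‖ ≤ ‖w - y‖) (hy : y ∈ K) : ‖q - y‖ ≤ ‖w - y‖ := by
  have : Nonempty K := ⟨⟨q, hqK⟩⟩
  have hinf : ‖w - q‖ = ⨅ v : K, ‖w - v‖ :=
    le_antisymm (le_ciInf fun v => hq v v.2)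
      (ciInf_le ⟨0, by rintro _ ⟨v, rfl⟩; exact norm_nonneg (w - v)⟩ (⟨q, hqK⟩ : K))
  have hinner := (norm_eq_iInf_iff_real_inner_le_zero hK hqK).mp hinf y hy
  have hsplit := norm_sub_sq_real (w - q) (y - q)
  rw [sub_sub_sub_cancel_right] at hsplit
  rw [norm_sub_rev]
  nlinarith [norm_nonneg (w - q), norm_nonneg (y - q), norm_nonneg (w - y)]

theorem norm_sub_sub_sq_le_of_inner_nonneg {x p v w : H} (h : 0 ≤ ⟪x - p + v, p - w⟫) :
    ‖p - v - w‖ ^ 2 ≤ ‖x - w‖ ^ 2 - ‖x - p‖ ^ 2 + ‖v‖ ^ 2 := by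
  have h1 : p - v - w = (p - w) - v := by abel
  have h2 : x - w = (x - p) + (p - w) := by abel
  rw [h1, h2, norm_sub_sq_real, norm_add_sq_real]
  rw [inner_add_left, real_inner_comm (p - w) v] at h
  linarith

variable {A B : H → H} {C : H → Set H} {domC : Set H}

theorem afbf_descent (hconv : Convex ℝ domC) {projC : H → H}
    (hproj_mem : ∀ w, projC w ∈ domC) (hproj_dist : ∀ w, ∀ y ∈ domC, ‖w - projC w‖ ≤ ‖w - y‖)
    (hpseudo : ∀ x y : H, (∃ cx ∈ C x, 0 ≤ ⟪A x + B x + cx, y - x⟫) →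
      ∀ cy ∈ C y, 0 ≤ ⟪A y + B y + cy, y - x⟫)
    {zbar : H} (hzbar : ∃ c0 ∈ C zbar, A zbar + B zbar + c0 = 0) (hzbar_mem : zbar ∈ domC)
    {γ : ℝ} (hγ : 0 < γ) {x p : H} (hp : x - γ • (A x + B x) - p ∈ γ • C p) :
    ‖projC (p - γ • (A p + B p) - (x - γ • (A x + B x)) + x) - zbar‖ ^ 2 ≤
      ‖x - zbar‖ ^ 2 - ‖x - p‖ ^ 2 + γ ^ 2 * ‖A p + B p - A x - B x‖ ^ 2 := by
  obtain ⟨c0, hc0, hc0_eq⟩ := hzbar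
  set cp := γ⁻¹ • (x - γ • (A x + B x) - p)
  have hcp : cp ∈ C p := (Set.mem_smul_set_iff_inv_smul_mem₀ hγ.ne' _ _).mp hp
  have hinner : 0 ≤ ⟪A p + B p + cp, p - zbar⟫ :=
    hpseudo zbar p ⟨c0, hc0, by simp [hc0_eq]⟩ cp hcp
  have hstep : x - p + γ • (A p + B p - A x - B x) = γ • (A p + B p + cp) := by
    simp only [cp, smul_add, smul_smul, mul_inv_cancel₀ hγ.ne', one_smul]
    module
  have hxhat : p - γ • (A p + B p) - (x - γ • (A x + B x)) + x
      = p - γ • (A p + B p - A x - B x) := by module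
  calc _ ≤ ‖p - γ • (A p + B p - A x - B x) - zbar‖ ^ 2 := by
        rw [← hxhat]
        gcongr
        exact norm_sub_le_of_forall_norm_sub_le hconv (hproj_mem _) (hproj_dist _) hzbar_mem
    _ ≤ ‖x - zbar‖ ^ 2 - ‖x - p‖ ^ 2 + ‖γ • (A p + B p - A x - B x)‖ ^ 2 := by
        refine norm_sub_sub_sq_le_of_inner_nonneg ?_
        rw [hstep, real_inner_smul_left]
        exact mul_nonneg hγ.le hinner
    _ = _ := by rw [norm_smul, mul_pow, Real.norm_eq_abs, sq_abs]

theorem afbf_step (hdomC : domC = {x | (C x).Nonempty}) (hconv : Convex ℝ domC)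
    {projC : H → H} (hproj_mem : ∀ w, projC w ∈ domC)
    (hproj_dist : ∀ w, ∀ y ∈ domC, ‖w - projC w‖ ≤ ‖w - y‖)
    (hpseudo : ∀ x y : H, (∃ cx ∈ C x, 0 ≤ ⟪A x + B x + cx, y - x⟫) →
      ∀ cy ∈ C y, 0 ≤ ⟪A y + B y + cy, y - x⟫)
    {L μ θ β ε : ℝ} {a b c : H → ℝ}
    (hA : ∀ z₁ ∈ domC, ∀ z₂ ∈ domC, ‖A z₁ - A z₂‖ ^ 2 ≤
      a z₁ * ‖z₁ - z₂‖ ^ μ + b z₁ * ‖z₁ - z₂‖ ^ θ + c z₁ * ‖z₁ - z₂‖ ^ β)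
    (hB : ∀ x ∈ domC, ∀ y ∈ domC, ‖B x - B y‖ ≤ L * ‖x - y‖)
    (ha : ∀ v, 0 ≤ a v) (hb : ∀ v, 0 ≤ b v) (hc : ∀ v, 0 ≤ c v)
    (hμ0 : 0 < μ) (hμ2 : μ < 2) (hθ : 2 ≤ θ) (hβ : 2 ≤ β) (hε : 0 < ε)
    {zbar : H} (hzbar : ∃ c0 ∈ C zbar, A zbar + B zbar + c0 = 0)
    {x p : H} {γ α D γ₁ γ₂ : ℝ} (hx : x ∈ domC) (hγ : 0 < γ) (hα : α ≤ 1)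
    (hp : x - γ • (A x + B x) - p ∈ γ • C p) (hres : ‖x - p‖ ≤ γ * D)
    (hγ₁ : γ ≤ γ₁)
    (hpoly₁ : L ^ 2 * γ₁ ^ 2 + b x * D ^ (θ - 2) * γ₁ ^ θ + c x * D ^ (β - 2) * γ₁ ^ β
      + 2 ^ (2 - μ) * a x * γ₁ ^ μ * ε ^ (μ - 2) ≤ α / 2)
    (hγ₂ : γ ≤ γ₂)
    (hpoly₂ : L ^ 2 * D ^ (2 - μ) * γ₂ ^ 2 + b x * D ^ (θ - μ) * γ₂ ^ θ
      + c x * D ^ (β - μ) * γ₂ ^ β + a x * γ₂ ^ μ ≤ ε ^ (2 - μ) * α / 2 ^ (3 - μ)) :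
    ‖γ⁻¹ • (x - p) + A p + B p - A x - B x‖ ≤ ε ∨
      (‖projC (p - γ • (A p + B p) - (x - γ • (A x + B x)) + x) - zbar‖ ^ 2
          + (1 - α) * ‖x - p‖ ^ 2 ≤ ‖x - zbar‖ ^ 2 ∧
        γ * ‖γ⁻¹ • (x - p) + A p + B p - A x - B x‖ ≤ (1 + √α) * ‖x - p‖) := by
  have hp_mem : p ∈ domC := by
    rw [hdomC]; exact ⟨_, (Set.mem_smul_set_iff_inv_smul_mem₀ hγ.ne' _ _).mp hp⟩
  have hzbar_mem : zbar ∈ domC := by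
    obtain ⟨c0, hc0, -⟩ := hzbar; rw [hdomC]; exact ⟨c0, hc0⟩
  have hu : ‖γ⁻¹ • (x - p) + A p + B p - A x - B x‖
      ≤ γ⁻¹ * ‖x - p‖ + ‖A p + B p - A x - B x‖ := by
    calc ‖γ⁻¹ • (x - p) + A p + B p - A x - B x‖
        = ‖γ⁻¹ • (x - p) + (A p + B p - A x - B x)‖ := by congr 1; abel
      _ ≤ ‖γ⁻¹ • (x - p)‖ + ‖A p + B p - A x - B x‖ := norm_add_le _ _
      _ = γ⁻¹ * ‖x - p‖ + ‖A p + B p - A x - B x‖ := by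
        rw [norm_smul, Real.norm_of_nonneg (inv_nonneg.2 hγ.le)]
  have hD : 0 ≤ D := nonneg_of_mul_nonneg_right ((norm_nonneg _).trans hres) hγ
  -- nonnegativity facts for the side goals of `gcongr` below
  have := ha x; have := hb x; have := hc x
  have hpoly₁' : L ^ 2 * γ ^ 2 + b x * D ^ (θ - 2) * γ ^ θ + c x * D ^ (β - 2) * γ ^ β
      + 2 ^ (2 - μ) * a x * γ ^ μ * ε ^ (μ - 2) ≤ α / 2 :=
    le_trans (by gcongr) hpoly₁
  have hpoly₂' : L ^ 2 * D ^ (2 - μ) * γ ^ 2 + b x * D ^ (θ - μ) * γ ^ θ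
      + c x * D ^ (β - μ) * γ ^ β + a x * γ ^ μ ≤ ε ^ (2 - μ) * α / 2 ^ (3 - μ) :=
    le_trans (by gcongr) hpoly₂
  refine (afbf_residual_dichotomy (ha x) (hb x) (hc x) hε hγ (norm_nonneg _) (norm_nonneg _)
    hμ0 hμ2.le hθ hβ hα hres hu (norm_increment_sq_le hA hB hx hp_mem) hpoly₁' hpoly₂').imp_right
    fun ⟨herr, hu'⟩ => ⟨?_, hu'⟩
  linarith [afbf_descent hconv hproj_mem hproj_dist hpseudo hzbar hzbar_mem hγ hp]

end InnerProductSpace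

theorem afbf_rate_stepsize_choice_two_general
    {H : Type*} [NormedAddCommGroup H] [InnerProductSpace ℝ H]
    (A B : H → H) (C : H → Set H)
    (domC : Set H) (hdomC : domC = {x : H | (C x).Nonempty})
    (hdom_conv : Convex ℝ domC)
    -- B is L-Lipschitz on dom C
    (L : ℝ)
    (hB : ∀ x ∈ domC, ∀ y ∈ domC, ‖B x - B y‖ ≤ L * ‖x - y‖)
    -- A + B + C is pseudo-monotone
    (hpseudo : ∀ x y : H,
      (∃ cx ∈ C x, 0 ≤ ⟪A x + B x + cx, y - x⟫) →
      ∀ cy ∈ C y, 0 ≤ ⟪A y + B y + cy, y - x⟫)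
    -- metric projection onto dom C
    (projC : H → H)
    (hproj_mem : ∀ w : H, projC w ∈ domC)
    (hproj_dist : ∀ w : H, ∀ y ∈ domC, ‖w - projC w‖ ≤ ‖w - y‖)
    -- resolvent of γ C : single-valued, defined on all of H
    (J : ℝ → H → H)
    (hJ : ∀ γ : ℝ, 0 < γ → ∀ zz pz : H, J γ zz = pz ↔ zz - pz ∈ γ • C pz)
    -- Assumption 1(v)
    (ζ τ : ℝ)
    (hres : ∀ (uu w : H) (γ : ℝ), 0 < γ →
      ‖projC w - J γ (projC w - γ • uu)‖ ≤ γ * (ζ * ‖uu‖ + τ))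
    -- generalized Lipschitz condition on A with μ ∈ (0,2)
    (μ θ β : ℝ) (hμ0 : 0 < μ) (hμ2 : μ < 2) (hθ : 2 ≤ θ) (hβ : 2 ≤ β)
    (a b c : H → ℝ)
    (ha_nn : ∀ v : H, 0 ≤ a v) (hb_nn : ∀ v : H, 0 ≤ b v) (hc_nn : ∀ v : H, 0 ≤ c v)
    (hA : ∀ z₁ ∈ domC, ∀ z₂ ∈ domC,
      ‖A z₁ - A z₂‖ ^ 2 ≤
        a z₁ * ‖z₁ - z₂‖ ^ μ + b z₁ * ‖z₁ - z₂‖ ^ θ + c z₁ * ‖z₁ - z₂‖ ^ β)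
    -- d(x) = ζ‖Ax + Bx‖ + τ
    (d : H → ℝ) (hd : ∀ v : H, d v = ζ * ‖A v + B v‖ + τ)
    -- Stepsize Choice 2
    (ε : ℝ) (hε0 : 0 < ε)
    (αmin αmax σ : ℝ) (hαmax : αmax < 1)
    (α : ℕ → ℝ) (hα : ∀ k : ℕ, α k ∈ Set.Icc αmin αmax)
    (x z p qq xhat u : ℕ → H) (γ γbar γbar₁ γbar₂ : ℕ → ℝ)
    (hγbar₁_eq : ∀ k : ℕ,
      L ^ 2 * γbar₁ k ^ 2
        + b (x k) * d (x k) ^ (θ - 2) * γbar₁ k ^ θ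
        + c (x k) * d (x k) ^ (β - 2) * γbar₁ k ^ β
        + 2 ^ (2 - μ) * a (x k) * γbar₁ k ^ μ * ε ^ (μ - 2) = α k / 2)
    (hγbar₂_eq : ∀ k : ℕ,
      L ^ 2 * d (x k) ^ (2 - μ) * γbar₂ k ^ 2
        + b (x k) * d (x k) ^ (θ - μ) * γbar₂ k ^ θ
        + c (x k) * d (x k) ^ (β - μ) * γbar₂ k ^ β
        + a (x k) * γbar₂ k ^ μ = ε ^ (2 - μ) * α k / 2 ^ (3 - μ))
    (hγbar : ∀ k : ℕ, γbar k = min (γbar₁ k) (γbar₂ k))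
    (hγ_le : ∀ k : ℕ, σ ≤ γbar k → σ ≤ γ k ∧ γ k ≤ γbar k)
    (hγ_eq : ∀ k : ℕ, γbar k < σ → γ k = γbar k)
    -- AFBF iterations
    (hx0 : x 0 ∈ domC)
    (hz : ∀ k : ℕ, z k = x k - γ k • (A (x k) + B (x k)))
    (hp : ∀ k : ℕ, p k = J (γ k) (z k))
    (hq : ∀ k : ℕ, qq k = p k - γ k • (A (p k) + B (p k)))
    (hxhat : ∀ k : ℕ, xhat k = qq k - z k + x k)
    (hx_succ : ∀ k : ℕ, x (k + 1) = projC (xhat k))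
    (hu : ∀ k : ℕ, u k =
      (γ k)⁻¹ • (x k - p k) + A (p k) + B (p k) - A (x k) - B (x k))
    -- zer(A+B+C) ≠ ∅ and z̄ ∈ zer(A+B+C)
    (zbar : H) (hzbar : ∃ c0 ∈ C zbar, A zbar + B zbar + c0 = 0)
    -- lower bound on the stepsizes
    (γmin : ℝ) (hγmin : 0 < γmin) (hγ_lb : ∀ k : ℕ, γmin ≤ γ k) :
    ∀ K : ℕ, 0 < K →
      1 / ε ^ 2 * ((1 + Real.sqrt αmax) ^ 2 / (γmin ^ 2 * (1 - αmax))) * ‖x 0 - zbar‖ ^ 2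
        ≤ (K : ℝ) →
      ∃ k : ℕ, k < K ∧ ‖u k‖ ≤ ε := by
  intro K hK hKbound
  by_contra! hcon
  have hγ (k : ℕ) : 0 < γ k := hγmin.trans_le (hγ_lb k)
  have hx_mem : ∀ k, x k ∈ domC := Nat.rec hx0 fun k _ => hx_succ k ▸ hproj_mem _
  have hγ_le_bar (k : ℕ) : γ k ≤ min (γbar₁ k) (γbar₂ k) := hγbar k ▸
    (le_or_gt σ (γbar k)).elim (fun h => (hγ_le k h).2) fun h => (hγ_eq k h).le
  have hlarge (k : ℕ) (hk : k < K) :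
      ‖x (k + 1) - zbar‖ ^ 2 + (1 - αmax) * ‖x k - p k‖ ^ 2 ≤ ‖x k - zbar‖ ^ 2 ∧
        γ k * ‖u k‖ ≤ (1 + √αmax) * ‖x k - p k‖ := by
    have hpk : x k - γ k • (A (x k) + B (x k)) - p k ∈ γ k • C (p k) :=
      hz k ▸ (hJ _ (hγ k) _ _).mp (hp k).symm
    have hres_k : ‖x k - p k‖ ≤ γ k * d (x k) := by
      have h := hres (A (x k) + B (x k)) (x k) (γ k) (hγ k)
      rwa [eq_of_forall_norm_sub_le (hx_mem k) (hproj_dist _), ← hz, ← hp, ← hd] at h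
    rw [hx_succ, hxhat, hq, hz, hu]
    refine (afbf_step hdomC hdom_conv hproj_mem hproj_dist hpseudo hA hB ha_nn hb_nn hc_nn
      hμ0 hμ2 hθ hβ hε0 hzbar (hx_mem k) (hγ k) hαmax.le hpk hres_k
      (le_min_iff.mp (hγ_le_bar k)).1 ((hγbar₁_eq k).trans_le (by linarith [(hα k).2]))
      (le_min_iff.mp (hγ_le_bar k)).2 ((hγbar₂_eq k).trans_le (by gcongr; exact (hα k).2))).resolve_left ?_
    rw [← hu]
    exact (hcon k hk).not_ge
  have hKbound' : ‖x 0 - zbar‖ ^ 2 / ((1 - αmax) * (ε * γmin / (1 + √αmax)) ^ 2) ≤ K := by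
    convert hKbound using 1
    field_simp
  obtain ⟨k, hk, hsmall⟩ := exists_lt_le_of_forall_add_mul_le
    (V := fun k => ‖x k - zbar‖ ^ 2) (t := fun k => ‖x k - p k‖ ^ 2)
    hK (sub_pos.2 hαmax) (by positivity) hKbound' (sq_nonneg _) fun k hk => (hlarge k hk).1
  have hs := (pow_le_pow_iff_left₀ (norm_nonneg _) (by positivity) two_ne_zero).mp hsmall
  rw [le_div_iff₀ (by positivity)] at hs
  nlinarith [(hlarge k hk).2, mul_lt_mul_of_pos_right (hcon k hk) (hγ k),
    mul_le_mul_of_nonneg_left (hγ_lb k) hε0.le]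

theorem afbf_rate_stepsize_choice_two
    {H : Type*} [NormedAddCommGroup H] [InnerProductSpace ℝ H] [FiniteDimensional ℝ H]
    (A B : H → H) (C : H → Set H)
    (domC : Set H) (hdomC : domC = {x : H | (C x).Nonempty})
    (hdom_ne : domC.Nonempty) (hdom_closed : IsClosed domC) (hdom_conv : Convex ℝ domC)
    -- C is maximally monotone
    (hCmono : ∀ x y : H, ∀ u ∈ C x, ∀ v ∈ C y, 0 ≤ ⟪u - v, x - y⟫)
    (hCmax : ∀ x u : H, (∀ y : H, ∀ v ∈ C y, 0 ≤ ⟪u - v, x - y⟫) → u ∈ C x)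
    -- A is continuous on dom C
    (hAcont : ContinuousOn A domC)
    -- B is L-Lipschitz on dom C
    (L : ℝ) (hL : 0 < L)
    (hB : ∀ x ∈ domC, ∀ y ∈ domC, ‖B x - B y‖ ≤ L * ‖x - y‖)
    -- A + B + C is pseudo-monotone
    (hpseudo : ∀ x y : H,
      (∃ cx ∈ C x, 0 ≤ ⟪A x + B x + cx, y - x⟫) →
      ∀ cy ∈ C y, 0 ≤ ⟪A y + B y + cy, y - x⟫)
    -- metric projection onto dom C
    (projC : H → H)
    (hproj_mem : ∀ w : H, projC w ∈ domC)
    (hproj_dist : ∀ w : H, ∀ y ∈ domC, ‖w - projC w‖ ≤ ‖w - y‖)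
    -- resolvent of γ C : single-valued, defined on all of H
    (J : ℝ → H → H)
    (hJ : ∀ γ : ℝ, 0 < γ → ∀ zz pz : H, J γ zz = pz ↔ zz - pz ∈ γ • C pz)
    -- Assumption 1(v)
    (ζ τ : ℝ) (hζ : 0 < ζ) (hτ : 0 < τ)
    (hres : ∀ (uu w : H) (γ : ℝ), 0 < γ →
      ‖projC w - J γ (projC w - γ • uu)‖ ≤ γ * (ζ * ‖uu‖ + τ))
    -- generalized Lipschitz condition on A with μ ∈ (0,2)
    (μ θ β : ℝ) (hμ0 : 0 < μ) (hμ2 : μ < 2) (hθ : 2 ≤ θ) (hβ : 2 ≤ β)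
    (a b c : H → ℝ)
    (ha_cont : Continuous a) (hb_cont : Continuous b) (hc_cont : Continuous c)
    (ha_nn : ∀ v : H, 0 ≤ a v) (hb_nn : ∀ v : H, 0 ≤ b v) (hc_nn : ∀ v : H, 0 ≤ c v)
    (hA : ∀ z₁ ∈ domC, ∀ z₂ ∈ domC,
      ‖A z₁ - A z₂‖ ^ 2 ≤
        a z₁ * ‖z₁ - z₂‖ ^ μ + b z₁ * ‖z₁ - z₂‖ ^ θ + c z₁ * ‖z₁ - z₂‖ ^ β)
    -- d(x) = ζ‖Ax + Bx‖ + τ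
    (d : H → ℝ) (hd : ∀ v : H, d v = ζ * ‖A v + B v‖ + τ)
    -- Stepsize Choice 2
    (ε : ℝ) (hε0 : 0 < ε) (hε1 : ε < 1)
    (αmin αmax σ : ℝ) (hαmin : 0 < αmin) (hα_le : αmin ≤ αmax) (hαmax : αmax < 1)
    (hσ : 0 < σ)
    (α : ℕ → ℝ) (hα : ∀ k : ℕ, α k ∈ Set.Icc αmin αmax)
    (x z p qq xhat u : ℕ → H) (γ γbar γbar₁ γbar₂ : ℕ → ℝ)
    (hγbar₁_pos : ∀ k : ℕ, 0 < γbar₁ k)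
    (hγbar₁_eq : ∀ k : ℕ,
      L ^ 2 * γbar₁ k ^ 2
        + b (x k) * d (x k) ^ (θ - 2) * γbar₁ k ^ θ
        + c (x k) * d (x k) ^ (β - 2) * γbar₁ k ^ β
        + 2 ^ (2 - μ) * a (x k) * γbar₁ k ^ μ * ε ^ (μ - 2) = α k / 2)
    (hγbar₂_pos : ∀ k : ℕ, 0 < γbar₂ k)
    (hγbar₂_eq : ∀ k : ℕ,
      L ^ 2 * d (x k) ^ (2 - μ) * γbar₂ k ^ 2
        + b (x k) * d (x k) ^ (θ - μ) * γbar₂ k ^ θ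
        + c (x k) * d (x k) ^ (β - μ) * γbar₂ k ^ β
        + a (x k) * γbar₂ k ^ μ = ε ^ (2 - μ) * α k / 2 ^ (3 - μ))
    (hγbar : ∀ k : ℕ, γbar k = min (γbar₁ k) (γbar₂ k))
    (hγ_le : ∀ k : ℕ, σ ≤ γbar k → σ ≤ γ k ∧ γ k ≤ γbar k)
    (hγ_eq : ∀ k : ℕ, γbar k < σ → γ k = γbar k)
    -- AFBF iterations
    (hx0 : x 0 ∈ domC)
    (hz : ∀ k : ℕ, z k = x k - γ k • (A (x k) + B (x k)))
    (hp : ∀ k : ℕ, p k = J (γ k) (z k))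
    (hq : ∀ k : ℕ, qq k = p k - γ k • (A (p k) + B (p k)))
    (hxhat : ∀ k : ℕ, xhat k = qq k - z k + x k)
    (hx_succ : ∀ k : ℕ, x (k + 1) = projC (xhat k))
    (hu : ∀ k : ℕ, u k =
      (γ k)⁻¹ • (x k - p k) + A (p k) + B (p k) - A (x k) - B (x k))
    -- zer(A+B+C) ≠ ∅ and z̄ ∈ zer(A+B+C)
    (hzer : ∃ zb : H, ∃ c0 ∈ C zb, A zb + B zb + c0 = 0)
    (zbar : H) (hzbar : ∃ c0 ∈ C zbar, A zbar + B zbar + c0 = 0)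
    -- lower bound on the stepsizes
    (γmin : ℝ) (hγmin : 0 < γmin) (hγ_lb : ∀ k : ℕ, γmin ≤ γ k) :
    ∀ K : ℕ, 0 < K →
      1 / ε ^ 2 * ((1 + Real.sqrt αmax) ^ 2 / (γmin ^ 2 * (1 - αmax))) * ‖x 0 - zbar‖ ^ 2
        ≤ (K : ℝ) →
      ∃ k : ℕ, k < K ∧ ‖u k‖ ≤ ε :=
  afbf_rate_stepsize_choice_two_general A B C domC hdomC hdom_conv L hB hpseudo projC hproj_mem
    hproj_dist J hJ ζ τ hres μ θ β hμ0 hμ2 hθ hβ a b c ha_nn hb_nn hc_nn hA d hd ε hε0 αmin αmax σ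
    hαmax α hα x z p qq xhat u γ γbar γbar₁ γbar₂ hγbar₁_eq hγbar₂_eq hγbar hγ_le hγ_eq hx0 hz hp hq
    hxhat hx_succ hu zbar hzbar γmin hγmin hγ_lb
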